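/- (Minimal critical spectrum.) For every real δ with |δ| < 1/√(12α): if κ, k ∈ ℝ satisfy d_{c_*(δ)}(iκ, −η_*(δ) + ik) = 0, then κ = 0 and k = 0. -/

import Mathlib

/-!
`η_*²` is the smaller root `(1 - √(1 - 12δ²α)) / (6δ²)` of `3δ²x² - x + α = 0`, so that
`6δ²η_*² < 1`. With `c = c_*`, the real part of `d_c(iκ, -η_* + ik)` collapses to
`-k²(1 - 6δ²η_*² + δ²k²)`, which vanishes only for `k = 0`; the imaginary part is then `-κ`.
-/

noncomputable def etaStar (α δ : ℝ) : ℝ :=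
  if δ = 0 then Real.sqrt α
  else 1 / (|δ| * Real.sqrt 6) * Real.sqrt (1 - Real.sqrt (1 - 12 * δ ^ 2 * α))

noncomputable def cStar (α δ : ℝ) : ℝ :=
  2 * etaStar α δ - 4 * δ ^ 2 * etaStar α δ ^ 3

/-- The dispersion relation at `+∞`: `d_c(λ, ν) = -δ²ν⁴ + ν² + cν + α - λ`. -/
noncomputable def disp (α δ c : ℝ) (lam ν : ℂ) : ℂ :=
  -(δ : ℂ) ^ 2 * ν ^ 4 + ν ^ 2 + (c : ℂ) * ν + (α : ℂ) - lam

lemma twelve_mul_sq_mul_lt_one {α δ : ℝ} (hα : 0 < α) (hδ : |δ| < 1 / √(12 * α)) :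
    12 * δ ^ 2 * α < 1 := by
  have hpos : 0 < √(12 * α) := Real.sqrt_pos.mpr (by positivity)
  have hprod : |δ| * √(12 * α) < 1 := (lt_div_iff₀ hpos).mp (by simpa using hδ)
  calc 12 * δ ^ 2 * α = (|δ| * √(12 * α)) ^ 2 := by
        rw [mul_pow, sq_abs, Real.sq_sqrt (by positivity)]; ring
    _ < 1 := by nlinarith [mul_nonneg (abs_nonneg δ) hpos.le]

lemma etaStar_sq_of_ne_zero {α δ : ℝ} (hα : 0 ≤ α) (hδ : δ ≠ 0) :
    etaStar α δ ^ 2 = (1 - √(1 - 12 * δ ^ 2 * α)) / (6 * δ ^ 2) := by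
  have hs : √(1 - 12 * δ ^ 2 * α) ≤ 1 := Real.sqrt_le_one.mpr (by nlinarith [sq_nonneg δ])
  rw [etaStar, if_neg hδ, mul_pow, div_pow, mul_pow, sq_abs, Real.sq_sqrt (by norm_num),
    Real.sq_sqrt (by linarith)]
  field_simp

lemma etaStar_sq_root {α δ : ℝ} (hα : 0 ≤ α) (h : 12 * δ ^ 2 * α ≤ 1) :
    α = etaStar α δ ^ 2 - 3 * δ ^ 2 * etaStar α δ ^ 4 := by
  by_cases hδ : δ = 0
  · simp [etaStar, hδ, Real.sq_sqrt hα]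
  · have hsq := Real.sq_sqrt (show 0 ≤ 1 - 12 * δ ^ 2 * α by linarith)
    rw [show etaStar α δ ^ 4 = (etaStar α δ ^ 2) ^ 2 by ring, etaStar_sq_of_ne_zero hα hδ]
    set s := √(1 - 12 * δ ^ 2 * α)
    field_simp
    linear_combination 3 * hsq

lemma six_mul_sq_mul_etaStar_sq_lt_one {α δ : ℝ} (hα : 0 ≤ α) (h : 12 * δ ^ 2 * α < 1) :
    6 * δ ^ 2 * etaStar α δ ^ 2 < 1 := by
  by_cases hδ : δ = 0
  · simp [hδ]
  · have hs : 0 < √(1 - 12 * δ ^ 2 * α) := Real.sqrt_pos.mpr (by linarith)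
    rw [etaStar_sq_of_ne_zero hα hδ, mul_div_cancel₀ _ (by positivity)]
    linarith

lemma disp_critical_eq {α δ η c : ℝ} (hα : α = η ^ 2 - 3 * δ ^ 2 * η ^ 4)
    (hc : c = 2 * η - 4 * δ ^ 2 * η ^ 3) (κ k : ℝ) :
    disp α δ c (Complex.I * κ) (-η + Complex.I * k) =
      -(k ^ 2 * (1 - 6 * δ ^ 2 * η ^ 2 + δ ^ 2 * k ^ 2) : ℝ) -
        ((4 * δ ^ 2 * η * k ^ 3 + κ : ℝ) : ℂ) * Complex.I := by
  subst hα hc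
  simp only [disp]
  push_cast
  ring_nf
  rw [Complex.I_sq, Complex.I_pow_three, Complex.I_pow_four]
  ring

lemma eq_zero_of_disp_critical_eq_zero {α δ η c κ k : ℝ} (hα : α = η ^ 2 - 3 * δ ^ 2 * η ^ 4)
    (hc : c = 2 * η - 4 * δ ^ 2 * η ^ 3) (hη : 6 * δ ^ 2 * η ^ 2 < 1)
    (h : disp α δ c (Complex.I * κ) (-η + Complex.I * k) = 0) : κ = 0 ∧ k = 0 := by
  rw [disp_critical_eq hα hc, Complex.ext_iff] at h
  simp only [Complex.sub_re, Complex.sub_im, Complex.neg_re, Complex.neg_im, Complex.ofReal_re,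
    Complex.ofReal_im, Complex.re_ofReal_mul, Complex.im_ofReal_mul, Complex.I_re, Complex.I_im,
    Complex.zero_re, Complex.zero_im] at h
  obtain ⟨hre, him⟩ := h
  have hk : k = 0 := by
    have hfactor : 0 < 1 - 6 * δ ^ 2 * η ^ 2 + δ ^ 2 * k ^ 2 := by
      linarith [mul_nonneg (sq_nonneg δ) (sq_nonneg k)]
    simpa [hfactor.ne'] using hre
  exact ⟨by simpa [hk] using him, hk⟩

theorem stmt2 (α : ℝ) (hα : 0 < α) (δ : ℝ) (hδ : |δ| < 1 / Real.sqrt (12 * α))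
    (κ k : ℝ)
    (h : disp α δ (cStar α δ) (Complex.I * (κ : ℂ))
        (-(etaStar α δ : ℂ) + Complex.I * (k : ℂ)) = 0) :
    κ = 0 ∧ k = 0 := by
  have hsmall := twelve_mul_sq_mul_lt_one hα hδ
  exact eq_zero_of_disp_critical_eq_zero (etaStar_sq_root hα.le hsmall.le) rfl
    (six_mul_sq_mul_etaStar_sq_lt_one hα.le hsmall) h
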